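/- Let D be the derivation on ℝ[x,y] with D(x) = x·y and D(y) = x², L_n = D^n(x), M_n = D^n(y). Then for all n ≥ 1, Σ_{k=0}^{n} C(n,k)·L_k·L_{n-k} = Σ_{k=0}^{n} C(n,k)·M_k·M_{n-k}. -/

import Mathlib

open MvPolynomial Finset

noncomputable def peakD (f : MvPolynomial (Fin 2) ℝ) : MvPolynomial (Fin 2) ℝ :=
  X 0 * X 1 * pderiv 0 f + X 0 ^ 2 * pderiv 1 f

noncomputable def leftPeakPoly (n : ℕ) : MvPolynomial (Fin 2) ℝ := peakD^[n] (X 0)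

noncomputable def interiorPeakPoly (n : ℕ) : MvPolynomial (Fin 2) ℝ := peakD^[n] (X 1)

/-!
`D` is a derivation, so by the general Leibniz rule the two sums are `Dⁿ(x²)` and `Dⁿ(y²)`.
These agree for `n ≥ 1` because already `D(x²) = 2x²y = D(y²)`.
-/

namespace Derivation

variable {R A : Type*} [CommSemiring R] [CommSemiring A] [Algebra R A]

theorem iterate_map_mul (D : Derivation R A A) (n : ℕ) (a b : A) :
    D^[n] (a * b) = ∑ ij ∈ antidiagonal n, n.choose ij.1 • (D^[ij.1] a * D^[ij.2] b) := by
  induction n with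
  | zero => simp
  | succ n ih =>
    rw [sum_antidiagonal_choose_succ_nsmul (M := A) (fun i j => D^[i] a * D^[j] b) n]
    simp only [Function.iterate_succ_apply', ih, map_sum, map_nsmul, leibniz, smul_eq_mul,
      smul_add, sum_add_distrib]
    congr 1
    refine sum_congr rfl fun ⟨i, j⟩ hij ↦ ?_
    rw [n.choose_symm_of_eq_add (mem_antidiagonal.1 hij).symm, mul_comm]

theorem iterate_map_mul' (D : Derivation R A A) (n : ℕ) (a b : A) :
    D^[n] (a * b) = ∑ i ∈ range (n + 1), n.choose i • (D^[i] a * D^[n - i] b) := by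
  rw [iterate_map_mul]
  exact Nat.sum_antidiagonal_eq_sum_range_succ (fun i j ↦ n.choose i • (D^[i] a * D^[j] b)) n

end Derivation

noncomputable def peakDerivation :
    Derivation ℝ (MvPolynomial (Fin 2) ℝ) (MvPolynomial (Fin 2) ℝ) :=
  (X 0 * X 1 : MvPolynomial (Fin 2) ℝ) • pderiv 0 + (X 0 ^ 2 : MvPolynomial (Fin 2) ℝ) • pderiv 1

theorem coe_peakDerivation : ⇑peakDerivation = peakD := by
  funext f
  simp [peakDerivation, peakD]

theorem iterate_peakD_mul_self (n : ℕ) (f : MvPolynomial (Fin 2) ℝ) :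
    peakD^[n] (f * f) =
      ∑ k ∈ range (n + 1),
        (n.choose k : MvPolynomial (Fin 2) ℝ) * peakD^[k] f * peakD^[n - k] f := by
  simp only [← coe_peakDerivation, Derivation.iterate_map_mul', nsmul_eq_mul, mul_assoc]

theorem peakD_X_mul_self_eq : peakD (X 0 * X 0) = peakD (X 1 * X 1) := by
  simp only [peakD, Derivation.leibniz, pderiv_X_self, pderiv_X_of_ne zero_ne_one,
    pderiv_X_of_ne one_ne_zero, smul_eq_mul]
  ring

theorem peak_convolution_eq (n : ℕ) (hn : 1 ≤ n) :
    ∑ k ∈ Finset.range (n + 1),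
        (n.choose k : MvPolynomial (Fin 2) ℝ) * leftPeakPoly k * leftPeakPoly (n - k) =
      ∑ k ∈ Finset.range (n + 1),
        (n.choose k : MvPolynomial (Fin 2) ℝ) * interiorPeakPoly k * interiorPeakPoly (n - k) := by
  obtain ⟨m, rfl⟩ := Nat.exists_eq_add_of_le' hn
  simp only [leftPeakPoly, interiorPeakPoly, ← iterate_peakD_mul_self,
    Function.iterate_succ_apply, peakD_X_mul_self_eq]
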